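/- arXiv:0911.0773 — 4 statements merged into one kernel-verified Lean document; each statement's English description precedes it below -/
import Mathlib

section
/- Let (μ_n) and μ be finite Borel measures on ℝ such that μ_n → μ weakly. Then sup_{0<ε≤1} |I_ε(μ_n) − I_ε(μ)| → 0 as n → ∞ if and only if μ_n* → μ* weakly. -/
open MeasureTheory Filter Topology

/-- Weak convergence of a sequence of finite Borel measures on `ℝ`:
`∫ f dμₙ → ∫ f dμ` for every bounded continuous `f : ℝ → ℝ`. -/
def WeakTendsto (μs : ℕ → Measure ℝ) (μ : Measure ℝ) : Prop :=
  ∀ f : ℝ → ℝ, Continuous f → (∃ C, ∀ x, |f x| ≤ C) →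
    Tendsto (fun n => ∫ x, f x ∂(μs n)) atTop (𝓝 (∫ x, f x ∂μ))

/-- The purely atomic measure `μ* = Σ_x μ({x})² δ_x`. -/
noncomputable def starMeasure (μ : Measure ℝ) : Measure ℝ :=
  Measure.sum (fun x : ℝ => (μ {x}) ^ 2 • Measure.dirac x)

/-- `I_ε(μ) = ∫∫ Φ(|x−y|/ε) μ(dx) μ(dy)` with `Φ(r) = max (1 − r) 0`. -/
noncomputable def Ieps (ε : ℝ) (μ : Measure ℝ) : ℝ :=
  ∫ p : ℝ × ℝ, max (1 - |p.1 - p.2| / ε) 0 ∂(μ.prod μ)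

/-!
As `ε ↓ 0`, the kernel `Φ(|x - y|/ε)` decreases to the indicator of the diagonal, so `I_ε(ν)`
decreases to `(ν ⊗ ν)(diagonal) = Σ ν({x})² = ν*(ℝ)`. Taking this value at `ε = 0` makes
`ε ↦ I_ε(ν)` monotone and continuous on `[0, 1]`. Weak convergence `μₙ → μ` implies
`μₙ ⊗ μₙ → μ ⊗ μ`, hence `I_ε(μₙ) → I_ε(μ)` for each `ε > 0`; by Pólya's argument (monotone
functions converging pointwise to a continuous limit on a compact interval converge uniformly) the
supremum tends to `0` iff `μₙ*(ℝ) → μ*(ℝ)`. That in turn is equivalent to `μₙ* → μ*`: for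
`|f| ≤ C`, the integral `∫ f dν*` differs from `∫∫ f(x) Φ(|x - y|/ε) ν(dx) ν(dy)` by at most
`C (I_ε(ν) - ν*(ℝ))`, and these errors converge along the sequence and vanish as `ε → 0`.
-/

open Set

theorem tendstoUniformlyOn_Icc_of_monotoneOn {ι : Type*} {l : Filter ι} {F : ι → ℝ → ℝ}
    {f : ℝ → ℝ} {a b : ℝ} (hF : ∀ i, MonotoneOn (F i) (Icc a b)) (hf : ContinuousOn f (Icc a b))
    (hlim : ∀ x ∈ Icc a b, Tendsto (fun i => F i x) l (𝓝 (f x))) :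
    TendstoUniformlyOn F f l (Icc a b) := by
  rw [← tendstoLocallyUniformlyOn_iff_tendstoUniformlyOn_of_compact isCompact_Icc,
    Metric.tendstoLocallyUniformlyOn_iff]
  intro η hη x hx
  obtain ⟨r, hr, hfx⟩ := Metric.continuousWithinAt_iff.1 (hf x hx) (η / 3) (by positivity)
  have hclose : ∀ y ∈ Icc a b, |y - x| ≤ r / 2 → |f y - f x| < η / 3 := fun y hy hyx =>
    hfx hy (by rw [Real.dist_eq]; linarith)
  set s := max a (x - r / 2)
  set t := min b (x + r / 2)
  have hs : s ∈ Icc a b := ⟨le_max_left _ _, max_le (hx.1.trans hx.2) (by linarith [hx.2])⟩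
  have ht : t ∈ Icc a b := ⟨le_min (hx.1.trans hx.2) (by linarith [hx.1]), min_le_left _ _⟩
  refine ⟨Icc s t, mem_nhdsWithin.2 ⟨Ioo (x - r / 2) (x + r / 2), isOpen_Ioo,
    ⟨by linarith, by linarith⟩, fun y ⟨⟨hy₁, hy₂⟩, hya, hyb⟩ =>
      ⟨max_le hya hy₁.le, le_min hyb hy₂.le⟩⟩, ?_⟩
  filter_upwards [(hlim s hs).eventually (Metric.ball_mem_nhds _ (by positivity : 0 < η / 3)),
    (hlim t ht).eventually (Metric.ball_mem_nhds _ (by positivity : 0 < η / 3))]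
    with i hsi hti y hy
  have hy' : y ∈ Icc a b := ⟨hs.1.trans hy.1, hy.2.trans ht.2⟩
  have hFs := hF i hs hy' hy.1
  have hFt := hF i hy' ht hy.2
  have hfs := hclose s hs (abs_le.2 ⟨by linarith [le_max_right a (x - r / 2)],
    by linarith [max_le hx.1 (by linarith : x - r / 2 ≤ x)]⟩)
  have hft := hclose t ht (abs_le.2 ⟨by linarith [le_min hx.2 (by linarith : x ≤ x + r / 2)],
    by linarith [min_le_right b (x + r / 2)]⟩)
  have hfy := hclose y hy' (abs_le.2 ⟨by linarith [hy.1, le_max_right a (x - r / 2)],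
    by linarith [hy.2, min_le_right b (x + r / 2)]⟩)
  rw [Real.dist_eq] at hsi hti
  rw [Real.dist_eq, abs_lt] at *
  constructor <;> linarith

theorem TendstoUniformlyOn.tendsto_iSup_abs_sub {ι α : Type*} {l : Filter ι} {F : ι → α → ℝ}
    {f : α → ℝ} {s : Set α} (h : TendstoUniformlyOn F f l s) :
    Tendsto (fun i => ⨆ x : s, |F i x - f x|) l (𝓝 0) := by
  rw [Metric.tendsto_nhds]
  intro η hη
  filter_upwards [Metric.tendstoUniformlyOn_iff.1 h (η / 2) (half_pos hη)] with i hi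
  have hsup : ⨆ x : s, |F i x - f x| ≤ η / 2 :=
    Real.iSup_le (fun x => by rw [abs_sub_comm]; exact (hi x x.2).le) (by positivity)
  rw [Real.dist_0_eq_abs, abs_of_nonneg (Real.iSup_nonneg fun _ => abs_nonneg _)]
  linarith

theorem tendsto_iSup_Ioc_abs_sub_iff {ι : Type*} {l : Filter ι} {F : ι → ℝ → ℝ} {f : ℝ → ℝ}
    {a b : ℝ} (hab : a < b) (hF : ∀ i, Monotone (F i)) (hf : Monotone f)
    (hFc : ∀ i, Continuous (F i)) (hfc : Continuous f)
    (hlim : ∀ x ∈ Ioc a b, Tendsto (fun i => F i x) l (𝓝 (f x))) :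
    Tendsto (fun i => ⨆ x : Ioc a b, |F i x - f x|) l (𝓝 0) ↔
      Tendsto (fun i => F i a) l (𝓝 (f a)) := by
  refine ⟨fun hsup => ?_, fun ha => ?_⟩
  · have hbdd : ∀ i, BddAbove (range fun x : Ioc a b => |F i x - f x|) := fun i =>
      ⟨max (F i b - f a) (f b - F i a), by
        rintro _ ⟨⟨x, hx⟩, rfl⟩
        exact abs_sub_le_iff.2 ⟨le_max_of_le_left (sub_le_sub (hF i hx.2) (hf hx.1.le)),
          le_max_of_le_right (sub_le_sub (hf hx.2) (hF i hx.1.le))⟩⟩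
    have hle : ∀ i, |F i a - f a| ≤ ⨆ x : Ioc a b, |F i x - f x| := fun i =>
      le_of_tendsto ((((hFc i).sub hfc).abs.tendsto a).mono_left nhdsWithin_le_nhds)
        (Eventually.mono (Ioc_mem_nhdsGT hab) fun x hx =>
          le_ciSup (hbdd i) (⟨x, hx⟩ : Ioc a b))
    exact tendsto_sub_nhds_zero_iff.1 (squeeze_zero_norm hle hsup)
  · refine ((tendstoUniformlyOn_Icc_of_monotoneOn (fun i => (hF i).monotoneOn _)
      hfc.continuousOn fun x hx => ?_).mono Ioc_subset_Icc_self).tendsto_iSup_abs_sub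
    rcases hx.1.eq_or_lt with rfl | hax
    · exact ha
    · exact hlim x ⟨hax, hx.2⟩

theorem tendsto_of_approx {ι κ : Type*} {l : Filter ι} {l' : Filter κ} [l'.NeBot] {u : ι → ℝ}
    {a : ℝ} {v e : κ → ι → ℝ} {b c : κ → ℝ} (hc : Tendsto c l' (𝓝 0))
    (happrox : ∀ᶠ k in l', Tendsto (v k) l (𝓝 (b k)) ∧ Tendsto (e k) l (𝓝 (c k)) ∧
      (∀ i, |u i - v k i| ≤ e k i) ∧ |a - b k| ≤ c k) :
    Tendsto u l (𝓝 a) := by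
  rw [Metric.tendsto_nhds]
  intro η hη
  obtain ⟨k, hck, hv, he, hu, hb⟩ :=
    ((hc.eventually (gt_mem_nhds (by positivity : (0 : ℝ) < η / 4))).and happrox).exists
  filter_upwards [hv.eventually (Metric.ball_mem_nhds _ (by positivity : 0 < η / 4)),
    he.eventually (gt_mem_nhds (by linarith : c k < c k + η / 4))] with i hvi hei
  rw [Real.dist_eq] at hvi ⊢
  calc |u i - a| ≤ |u i - v k i| + |v k i - b k| + |b k - a| := by
        linarith [abs_sub_le (u i) (v k i) a, abs_sub_le (v k i) (b k) a]
    _ < η := by linarith [hu i, abs_sub_comm a (b k)]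

namespace MeasureTheory.FiniteMeasure

variable {α β : Type*} [MeasurableSpace α] [MeasurableSpace β]

theorem nonempty_of_ne_zero {μ : FiniteMeasure α} (hμ : μ ≠ 0) : Nonempty α := by
  by_contra h
  have : IsEmpty α := not_nonempty_iff.1 h
  exact hμ (Subtype.ext (Measure.eq_zero_of_isEmpty _))

theorem smul_prod_smul (c d : NNReal) (μ : FiniteMeasure α) (ν : FiniteMeasure β) :
    (c • μ).prod (d • ν) = (c * d) • μ.prod ν := by
  apply Subtype.ext
  change (c • μ.toMeasure).prod (d • ν.toMeasure) = (c * d) • μ.toMeasure.prod ν.toMeasure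
  rw [Measure.prod_smul_left, Measure.prod_smul_right, smul_smul]

variable [TopologicalSpace α] [TopologicalSpace β] [SecondCountableTopology α]
  [SecondCountableTopology β] [TopologicalSpace.PseudoMetrizableSpace α]
  [TopologicalSpace.PseudoMetrizableSpace β] [OpensMeasurableSpace α] [OpensMeasurableSpace β]

theorem tendsto_prod {ι : Type*} {l : Filter ι} {μs : ι → FiniteMeasure α}
    {νs : ι → FiniteMeasure β} {μ : FiniteMeasure α} {ν : FiniteMeasure β}
    (hμ : Tendsto μs l (𝓝 μ)) (hν : Tendsto νs l (𝓝 ν)) :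
    Tendsto (fun i => (μs i).prod (νs i)) l (𝓝 (μ.prod ν)) := by
  by_cases h0 : μ = 0 ∨ ν = 0
  · have : μ.prod ν = 0 := by rcases h0 with rfl | rfl <;> simp
    rw [this]
    refine tendsto_zero_of_tendsto_zero_mass ?_
    simp only [mass_prod]
    rcases h0 with rfl | rfl <;> simpa using hμ.mass.mul hν.mass
  push Not at h0
  have := nonempty_of_ne_zero h0.1
  have := nonempty_of_ne_zero h0.2
  have hnorm := (ProbabilityMeasure.continuous_prod.tendsto (μ.normalize, ν.normalize)).comp
    ((tendsto_normalize_of_tendsto hμ h0.1).prodMk_nhds (tendsto_normalize_of_tendsto hν h0.2))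
  have hdecomp : ∀ (μ : FiniteMeasure α) (ν : FiniteMeasure β),
      μ.prod ν = (μ.mass * ν.mass) • (μ.normalize.prod ν.normalize).toFiniteMeasure := by
    intro μ ν
    conv_lhs => rw [self_eq_mass_smul_normalize μ, self_eq_mass_smul_normalize ν]
    exact smul_prod_smul ..
  simp only [hdecomp]
  exact (hμ.mass.mul hν.mass).smul
    ((ProbabilityMeasure.toFiniteMeasure_continuous.tendsto _).comp hnorm)

end MeasureTheory.FiniteMeasure

theorem map_fst_restrict_diagonal (ν : Measure ℝ) [SFinite ν] :
    ((ν.prod ν).restrict (diagonal ℝ)).map Prod.fst = starMeasure ν := by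
  ext A hA
  have hsection : ∀ x, ν (Prod.mk x ⁻¹' (Prod.fst ⁻¹' A ∩ diagonal ℝ)) =
      A.indicator (fun x => ν {x}) x := fun x => by
    by_cases hx : x ∈ A
    · rw [indicator_of_mem hx]; congr 1; ext y; simp [hx, eq_comm]
    · rw [indicator_of_notMem hx, ← measure_empty (μ := ν)]; congr 1; ext y; simp [hx]
  rw [Measure.map_apply measurable_fst hA, Measure.restrict_apply (measurable_fst hA),
    Measure.prod_apply ((measurable_fst hA).inter measurableSet_diagonal)]
  simp only [hsection, starMeasure, Measure.sum_apply _ hA, Measure.smul_apply,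
    Measure.dirac_apply' _ hA, smul_eq_mul]
  set S := {x : ℝ | 0 < ν {x}}
  have hS : S.Countable := Measure.countable_meas_pos_of_disjoint_iUnion
    (fun _ => measurableSet_singleton _) fun _ _ h => disjoint_singleton.2 h
  have hsupp : (A.indicator fun x => ν {x}).support ⊆ S := fun x hx => by
    by_contra hxS
    exact hx (by simp [show ν {x} = 0 by simpa [S] using hxS])
  rw [← setLIntegral_eq_of_support_subset hsupp, lintegral_countable _ hS,
    tsum_subtype S fun x => A.indicator (fun x => ν {x}) x * ν {x}]
  congr 1; ext x
  by_cases hx : x ∈ S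
  · by_cases hxA : x ∈ A <;> simp [hx, hxA, sq]
  · simp [hx, show ν {x} = 0 by simpa [S] using hx]

/-- For `ε ≤ 0` this is the indicator of the diagonal, the limit of `Φ(|x - y| / ε)` as `ε ↓ 0`,
which makes `tentKernel · p` monotone and continuous on all of `ℝ`. -/
noncomputable def tentKernel (ε : ℝ) (p : ℝ × ℝ) : ℝ :=
  if 0 < ε then max (1 - |p.1 - p.2| / ε) 0 else (diagonal ℝ).indicator 1 p

theorem tentKernel_of_pos {ε : ℝ} (hε : 0 < ε) (p : ℝ × ℝ) :
    tentKernel ε p = max (1 - |p.1 - p.2| / ε) 0 := if_pos hε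

theorem tentKernel_of_nonpos {ε : ℝ} (hε : ε ≤ 0) : tentKernel ε = (diagonal ℝ).indicator 1 :=
  funext fun _ => if_neg hε.not_gt

theorem tentKernel_of_mem_diagonal (ε : ℝ) {p : ℝ × ℝ} (hp : p ∈ diagonal ℝ) :
    tentKernel ε p = 1 := by
  rw [mem_diagonal_iff] at hp
  by_cases hε : 0 < ε <;> simp [tentKernel, hε, hp]

theorem tentKernel_eq_zero {ε : ℝ} {p : ℝ × ℝ} (hp : p.1 ≠ p.2) (hε : ε ≤ |p.1 - p.2|) :
    tentKernel ε p = 0 := by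
  rcases le_or_gt ε 0 with h0 | h0
  · simp [tentKernel_of_nonpos h0, hp]
  · rw [tentKernel_of_pos h0, max_eq_right (sub_nonpos.2 ((one_le_div h0).2 hε))]

theorem tentKernel_nonneg (ε : ℝ) (p : ℝ × ℝ) : 0 ≤ tentKernel ε p := by
  unfold tentKernel
  split_ifs
  · exact le_max_right _ _
  · exact indicator_nonneg (fun _ _ => zero_le_one) _

theorem tentKernel_le_one (ε : ℝ) (p : ℝ × ℝ) : tentKernel ε p ≤ 1 := by
  unfold tentKernel
  split_ifs with hε
  · exact max_le (by linarith [div_nonneg (abs_nonneg (p.1 - p.2)) hε.le]) zero_le_one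
  · exact indicator_le_self' (fun _ _ => zero_le_one) p

theorem continuous_tentKernel {ε : ℝ} (hε : 0 < ε) : Continuous (tentKernel ε) := by
  simp only [funext (tentKernel_of_pos hε)]
  fun_prop

theorem measurable_tentKernel (ε : ℝ) : Measurable (tentKernel ε) := by
  rcases le_or_gt ε 0 with hε | hε
  · rw [tentKernel_of_nonpos hε]
    exact measurable_const.indicator measurableSet_diagonal
  · exact (continuous_tentKernel hε).measurable

theorem monotone_tentKernel (p : ℝ × ℝ) : Monotone fun ε => tentKernel ε p := by
  intro ε ε' h
  by_cases hp : p ∈ diagonal ℝ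
  · simp only [tentKernel_of_mem_diagonal _ hp, le_refl]
  rcases le_or_gt ε 0 with h0 | h0
  · simp only [tentKernel_of_nonpos h0, indicator_of_notMem hp]
    exact tentKernel_nonneg ε' p
  · simp only [tentKernel_of_pos h0, tentKernel_of_pos (h0.trans_le h)]
    gcongr

theorem continuous_tentKernel_apply (p : ℝ × ℝ) : Continuous fun ε => tentKernel ε p := by
  by_cases hp : p ∈ diagonal ℝ
  · simp only [tentKernel_of_mem_diagonal _ hp]
    exact continuous_const
  have hr : 0 < |p.1 - p.2| := abs_pos.2 (sub_ne_zero.2 hp)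
  refine continuous_iff_continuousAt.2 fun ε₀ => ?_
  rcases lt_or_ge 0 ε₀ with h0 | h0
  · refine ContinuousAt.congr ?_ ((eventually_gt_nhds h0).mono fun ε hε =>
      (tentKernel_of_pos hε p).symm)
    exact (continuousAt_const.sub (continuousAt_const.div continuousAt_id h0.ne')).max
      continuousAt_const
  · exact continuousAt_const.congr ((eventually_lt_nhds (h0.trans_lt hr)).mono fun ε hε =>
      (tentKernel_eq_zero hp hε.le).symm)

noncomputable def tentEnergy (ν : Measure ℝ) (ε : ℝ) : ℝ :=
  ∫ p, tentKernel ε p ∂(ν.prod ν)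

theorem tentEnergy_of_pos (ν : Measure ℝ) {ε : ℝ} (hε : 0 < ε) : tentEnergy ν ε = Ieps ε ν := by
  simp only [tentEnergy, Ieps, tentKernel_of_pos hε]

theorem tentEnergy_zero (ν : Measure ℝ) [SFinite ν] :
    tentEnergy ν 0 = (starMeasure ν).real univ := by
  rw [tentEnergy, tentKernel_of_nonpos le_rfl, integral_indicator_one measurableSet_diagonal,
    ← map_fst_restrict_diagonal, measureReal_def, measureReal_def,
    Measure.map_apply measurable_fst MeasurableSet.univ, preimage_univ,
    Measure.restrict_apply_univ]

section Finite

variable (ν : Measure ℝ) [IsFiniteMeasure ν]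

theorem integrable_tentKernel (ε : ℝ) : Integrable (tentKernel ε) (ν.prod ν) :=
  .of_bound (measurable_tentKernel ε).aestronglyMeasurable 1 (ae_of_all _ fun p => by
    rw [Real.norm_of_nonneg (tentKernel_nonneg ε p)]; exact tentKernel_le_one ε p)

theorem monotone_tentEnergy : Monotone (tentEnergy ν) := fun _ _ h =>
  integral_mono (integrable_tentKernel ν _) (integrable_tentKernel ν _)
    fun p => monotone_tentKernel p h

theorem continuous_tentEnergy : Continuous (tentEnergy ν) :=
  continuous_of_dominated (fun ε => (measurable_tentKernel ε).aestronglyMeasurable)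
    (fun ε => ae_of_all _ fun p => by
      rw [Real.norm_of_nonneg (tentKernel_nonneg ε p)]; exact tentKernel_le_one ε p)
    (integrable_const 1) (ae_of_all _ continuous_tentKernel_apply)

theorem abs_integral_starMeasure_sub_le {f : ℝ → ℝ} (hf : Continuous f) {C : ℝ}
    (hC : ∀ x, |f x| ≤ C) {ε : ℝ} (hε : 0 ≤ ε) :
    |∫ x, f x ∂starMeasure ν - ∫ p, f p.1 * tentKernel ε p ∂(ν.prod ν)| ≤
      C * (tentEnergy ν ε - tentEnergy ν 0) := by
  have hint : ∀ δ, Integrable (fun p : ℝ × ℝ => f p.1 * tentKernel δ p) (ν.prod ν) := fun δ =>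
    (integrable_tentKernel ν δ).bdd_mul (hf.comp continuous_fst).aestronglyMeasurable
      (ae_of_all _ fun p => hC p.1)
  have hstar : ∫ x, f x ∂starMeasure ν = ∫ p, f p.1 * tentKernel 0 p ∂(ν.prod ν) := by
    rw [← map_fst_restrict_diagonal, integral_map measurable_fst.aemeasurable
      hf.aestronglyMeasurable, ← integral_indicator measurableSet_diagonal,
      tentKernel_of_nonpos le_rfl]
    congr 1; ext p
    by_cases hp : p ∈ diagonal ℝ <;> simp [hp]
  rw [hstar, ← integral_sub (hint 0) (hint ε), tentEnergy, tentEnergy,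
    ← integral_sub (integrable_tentKernel ν ε) (integrable_tentKernel ν 0), ← integral_const_mul,
    ← Real.norm_eq_abs]
  refine norm_integral_le_of_norm_le (((integrable_tentKernel ν ε).sub
    (integrable_tentKernel ν 0)).const_mul C) (ae_of_all _ fun p => ?_)
  have hK := monotone_tentKernel p hε
  rw [Real.norm_eq_abs, ← mul_sub, abs_mul, abs_of_nonpos (sub_nonpos.2 hK), neg_sub]
  exact mul_le_mul_of_nonneg_right (hC p.1) (sub_nonneg.2 hK)

end Finite

namespace WeakTendsto

variable {μs : ℕ → Measure ℝ} {μ : Measure ℝ} [∀ n, IsFiniteMeasure (μs n)] [IsFiniteMeasure μ]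

theorem tendsto_finiteMeasure (h : WeakTendsto μs μ) :
    Tendsto (β := FiniteMeasure ℝ) (fun n => ⟨μs n, inferInstance⟩) atTop
      (𝓝 ⟨μ, inferInstance⟩) :=
  FiniteMeasure.tendsto_of_forall_integral_tendsto fun f =>
    h f f.continuous ⟨‖f‖, fun x => by simpa using f.norm_coe_le_norm x⟩

theorem tendsto_integral_prod_self (h : WeakTendsto μs μ) {g : ℝ × ℝ → ℝ} (hg : Continuous g)
    {C : ℝ} (hC : ∀ p, |g p| ≤ C) :
    Tendsto (fun n => ∫ p, g p ∂(μs n).prod (μs n)) atTop (𝓝 (∫ p, g p ∂μ.prod μ)) :=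
  FiniteMeasure.tendsto_iff_forall_integral_tendsto.1
    (FiniteMeasure.tendsto_prod h.tendsto_finiteMeasure h.tendsto_finiteMeasure)
    (BoundedContinuousFunction.ofNormedAddCommGroup g hg C fun p => by simpa using hC p)

theorem tendsto_tentEnergy (h : WeakTendsto μs μ) {ε : ℝ} (hε : 0 < ε) :
    Tendsto (fun n => tentEnergy (μs n) ε) atTop (𝓝 (tentEnergy μ ε)) :=
  h.tendsto_integral_prod_self (continuous_tentKernel hε) fun p => by
    rw [abs_of_nonneg (tentKernel_nonneg ε p)]; exact tentKernel_le_one ε p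

theorem tendsto_iSup_abs_Ieps_sub_iff (h : WeakTendsto μs μ) :
    Tendsto (fun n => ⨆ ε : Ioc (0 : ℝ) 1, |Ieps ε (μs n) - Ieps ε μ|) atTop (𝓝 0) ↔
      Tendsto (fun n => (starMeasure (μs n)).real univ) atTop
        (𝓝 ((starMeasure μ).real univ)) := by
  have hIeps : ∀ n, ⨆ ε : Ioc (0 : ℝ) 1, |Ieps ε (μs n) - Ieps ε μ| =
      ⨆ ε : Ioc (0 : ℝ) 1, |tentEnergy (μs n) ε - tentEnergy μ ε| := fun n =>
    iSup_congr fun ε => by rw [tentEnergy_of_pos _ ε.2.1, tentEnergy_of_pos _ ε.2.1]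
  simp only [hIeps, ← tentEnergy_zero]
  exact tendsto_iSup_Ioc_abs_sub_iff zero_lt_one (fun n => monotone_tentEnergy _)
    (monotone_tentEnergy _) (fun n => continuous_tentEnergy _) (continuous_tentEnergy _)
    fun ε hε => h.tendsto_tentEnergy hε.1

theorem weakTendsto_starMeasure_iff (h : WeakTendsto μs μ) :
    WeakTendsto (fun n => starMeasure (μs n)) (starMeasure μ) ↔
      Tendsto (fun n => (starMeasure (μs n)).real univ) atTop
        (𝓝 ((starMeasure μ).real univ)) := by
  refine ⟨fun hstar => by simpa using hstar (fun _ => 1) continuous_const ⟨1, by simp⟩,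
    fun hmass f hf ⟨C, hC⟩ => ?_⟩
  have hgap : Tendsto (fun ε => C * (tentEnergy μ ε - tentEnergy μ 0)) (𝓝[>] 0) (𝓝 0) := by
    simpa using ((((continuous_tentEnergy μ).tendsto 0).mono_left nhdsWithin_le_nhds).sub_const
      (tentEnergy μ 0)).const_mul C
  refine tendsto_of_approx hgap (eventually_mem_nhdsWithin.mono fun ε (hε : 0 < ε) =>
    ⟨h.tendsto_integral_prod_self (g := fun p => f p.1 * tentKernel ε p)
      ((hf.comp continuous_fst).mul (continuous_tentKernel hε)) (C := C) fun p => ?_, ?_,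
      fun n => abs_integral_starMeasure_sub_le _ hf hC hε.le,
      abs_integral_starMeasure_sub_le _ hf hC hε.le⟩)
  · rw [abs_mul, abs_of_nonneg (tentKernel_nonneg ε p)]
    exact (mul_le_of_le_one_right (abs_nonneg _) (tentKernel_le_one ε p)).trans (hC p.1)
  · simp only [← tentEnergy_zero] at hmass
    exact ((h.tendsto_tentEnergy hε).sub hmass).const_mul C

end WeakTendsto

/-- Ethier–Kurtz: if `μₙ → μ` weakly, then
`sup_{0<ε≤1} |I_ε(μₙ) − I_ε(μ)| → 0` iff `μₙ* → μ*` weakly. -/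
theorem sup_Ieps_tendsto_iff_starMeasure_weakTendsto
    (μs : ℕ → Measure ℝ) (μ : Measure ℝ)
    (hfin : ∀ n, IsFiniteMeasure (μs n)) (hfinμ : IsFiniteMeasure μ)
    (hweak : WeakTendsto μs μ) :
    Tendsto (fun n => ⨆ ε : Set.Ioc (0 : ℝ) 1, |Ieps ε (μs n) - Ieps ε μ|)
        atTop (𝓝 0) ↔
      WeakTendsto (fun n => starMeasure (μs n)) (starMeasure μ) :=
  hweak.tendsto_iSup_abs_Ieps_sub_iff.trans hweak.weakTendsto_starMeasure_iff.symm
end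

section
/- Let m ≥ 1 be an integer, μ a finite Borel measure on ℝ, f : ℝ^m → ℝ bounded Borel measurable, and x ∈ ℝ. Then the first variational derivative of F_{m,f}(μ) = ⟨μ^m, f⟩ at x exists and equals the stated sum: lim_{r→0+} (1/r)·[⟨(μ + r δ_x)^m, f⟩ − ⟨μ^m, f⟩] = Σ_{i=1}^m ∫_{ℝ^{m−1}} f(y₁,…,y_{i−1}, x, y_i,…, y_{m−1}) dμ^{⊗(m−1)}(y₁,…,y_{m−1}). -/
/-!
Expanding the product multilinearly, `(μ + r δ_x)^{⊗(m+1)} = ∑_t r^{|t|} μ_t`, where `μ_t` puts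
`δ_x` in the coordinates `i ∈ t` and `μ` in the others. Hence `r ↦ ⟨(μ + r δ_x)^{m+1}, f⟩` is a
polynomial on `r ≥ 0`, the difference quotient is its slope at `0`, and the limit is the linear
coefficient `∑_i ⟨μ_{{i}}, f⟩`. Integrating out the Dirac coordinate of `μ_{{i}}` leaves
`∫ f(y₁, …, x, …, y_m) dμ^{⊗m}`.
-/

open MeasureTheory Filter Topology Finset
open scoped ENNReal

namespace MeasureTheory.Measure

theorem sigmaFinite_smul {α : Type*} [MeasurableSpace α] (μ : Measure α) [SigmaFinite μ]
    {c : ℝ≥0∞} (hc : c ≠ ∞) : SigmaFinite (c • μ) := by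
  lift c to NNReal using hc
  exact inferInstanceAs (SigmaFinite (c • μ))

variable {ι : Type*} [Fintype ι] [DecidableEq ι] {α : ι → Type*} [∀ i, MeasurableSpace (α i)]

theorem pi_add_smul (μ ν : ∀ i, Measure (α i)) [∀ i, SigmaFinite (μ i)]
    [∀ i, SigmaFinite (ν i)] {c : ℝ≥0∞} (hc : c ≠ ∞) :
    Measure.pi (fun i => μ i + c • ν i) =
      ∑ t : Finset ι, c ^ #t • Measure.pi (t.piecewise ν μ) := by
  have := fun i => sigmaFinite_smul (ν i) hc
  have (t : Finset ι) (i : ι) : SigmaFinite (t.piecewise ν μ i) :=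
    t.piecewise_cases ν μ (fun ρ => SigmaFinite ρ) inferInstance inferInstance
  refine pi_eq fun s _ => ?_
  simp only [finsetSum_apply, smul_apply, pi_pi, add_apply, smul_eq_mul, add_comm (μ _ _)]
  rw [Finset.prod_add, powerset_univ]
  refine Finset.sum_congr rfl fun t _ => ?_
  have hpiecewise : ∏ i, t.piecewise ν μ i (s i) =
      ∏ i, t.piecewise (fun i => ν i (s i)) (fun i => μ i (s i)) i :=
    Finset.prod_congr rfl fun i _ => by by_cases hi : i ∈ t <;> simp [hi]
  rw [hpiecewise, Finset.prod_piecewise, univ_inter, Finset.prod_mul_distrib, Finset.prod_const]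
  ring

end MeasureTheory.Measure

variable {E : Type*} [NormedAddCommGroup E] [NormedSpace ℝ E]

theorem integral_pi_add_smul {ι : Type*} [Fintype ι] [DecidableEq ι] {α : ι → Type*}
    [∀ i, MeasurableSpace (α i)] (μ ν : ∀ i, Measure (α i)) [∀ i, SigmaFinite (μ i)]
    [∀ i, SigmaFinite (ν i)] {f : (∀ i, α i) → E}
    (hf : ∀ t : Finset ι, Integrable f (Measure.pi (t.piecewise ν μ))) {r : ℝ} (hr : 0 ≤ r) :
    ∫ z, f z ∂Measure.pi (fun i => μ i + ENNReal.ofReal r • ν i) =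
      ∑ t : Finset ι, r ^ #t • ∫ z, f z ∂Measure.pi (t.piecewise ν μ) := by
  rw [Measure.pi_add_smul μ ν ENNReal.ofReal_ne_top, integral_finsetSum_measure fun t _ =>
    (hf t).smul_measure (ENNReal.pow_ne_top ENNReal.ofReal_ne_top)]
  simp only [integral_smul_measure, ENNReal.toReal_pow, ENNReal.toReal_ofReal hr]

theorem hasDerivAt_sum_pow_card_smul {ι : Type*} [Fintype ι] (a : Finset ι → E) :
    HasDerivAt (fun r : ℝ => ∑ t : Finset ι, r ^ #t • a t) (∑ i, a {i}) 0 := by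
  have hterm (t : Finset ι) :
      ((#t : ℝ) * (0 : ℝ) ^ (#t - 1)) • a t = if #t = 1 then a t else 0 := by
    rcases Nat.lt_trichotomy #t 1 with h | h | h
    · simp [Nat.lt_one_iff.mp h]
    · simp [h]
    · simp [zero_pow (Nat.sub_ne_zero_of_lt h), h.ne']
  convert HasDerivAt.fun_sum fun t _ => (hasDerivAt_pow #t (0 : ℝ)).smul_const (a t)
  rw [Finset.sum_congr rfl fun t _ => hterm t, Finset.sum_ite, Finset.sum_const_zero, add_zero,
    ← powerset_univ, ← powersetCard_eq_filter, powersetCard_one, Finset.sum_map]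
  rfl

theorem integral_pi_update_dirac {n : ℕ} {α : Fin (n + 1) → Type*} [∀ i, MeasurableSpace (α i)]
    (μ : ∀ i, Measure (α i)) [∀ i, SigmaFinite (μ i)] (i : Fin (n + 1))
    [MeasurableSingletonClass (α i)] (x : α i) (f : (∀ j, α j) → E) :
    ∫ z, f z ∂Measure.pi (Function.update μ i (Measure.dirac x)) =
      ∫ y, f (i.insertNth x y) ∂Measure.pi (fun j => μ (i.succAbove j)) := by
  have (j : Fin (n + 1)) : SigmaFinite (Function.update μ i (Measure.dirac x) j) := by
    rcases eq_or_ne j i with rfl | hj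
    · rw [Function.update_self]; infer_instance
    · rw [Function.update_of_ne hj]; infer_instance
  rw [← (measurePreserving_piFinSuccAbove _ i).symm.integral_comp']
  simp only [Function.update_self, Function.update_of_ne (Fin.succAbove_ne i _)]
  rw [Measure.dirac_prod, (measurableEmbedding_prodMk_left x).integral_map]
  rfl

/-- The first variational derivative of `F_{m,f}(μ) = ⟨μ^m, f⟩` at `x` exists and equals
`Σ_{i=1}^m ∫_{ℝ^{m−1}} f(y₁,…,y_{i−1}, x, y_i,…, y_{m−1}) dμ^{⊗(m−1)}`.
Here the integer `m ≥ 1` of the paper is written as `m + 1` with `m : ℕ`. -/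
theorem variational_deriv_moment_functional
    (m : ℕ) (μ : Measure ℝ) (hfinμ : IsFiniteMeasure μ)
    (f : (Fin (m + 1) → ℝ) → ℝ) (hfmeas : Measurable f)
    (hfbdd : ∃ C, ∀ z, |f z| ≤ C) (x : ℝ) :
    Tendsto
      (fun r : ℝ => r⁻¹ *
        ((∫ z, f z ∂(Measure.pi fun _ : Fin (m + 1) =>
            μ + ENNReal.ofReal r • Measure.dirac x)) -
          ∫ z, f z ∂(Measure.pi fun _ : Fin (m + 1) => μ)))
      (𝓝[>] (0 : ℝ))
      (𝓝 (∑ i : Fin (m + 1),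
        ∫ y : Fin m → ℝ, f (i.insertNth x y) ∂(Measure.pi fun _ : Fin m => μ))) := by
  obtain ⟨C, hC⟩ := hfbdd
  have hf (t : Finset (Fin (m + 1))) :
      Integrable f (Measure.pi (t.piecewise (fun _ => Measure.dirac x) fun _ => μ)) :=
    have (i : Fin (m + 1)) :
        IsFiniteMeasure (t.piecewise (fun _ => Measure.dirac x) (fun _ => μ) i) :=
      t.piecewise_cases (fun _ => Measure.dirac x) (fun _ => μ) (fun ρ => IsFiniteMeasure ρ)
        inferInstance hfinμ
    .of_bound hfmeas.aestronglyMeasurable C (.of_forall hC)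
  have hexpand {r : ℝ} (hr : 0 ≤ r) := integral_pi_add_smul _ _ hf hr
  have hexpand_zero := hexpand le_rfl
  simp only [ENNReal.ofReal_zero, zero_smul, add_zero] at hexpand_zero
  have hslope := hasDerivAt_iff_tendsto_slope_zero.mp <| hasDerivAt_sum_pow_card_smul
    fun t : Finset (Fin (m + 1)) =>
      ∫ z, f z ∂Measure.pi (t.piecewise (fun _ => Measure.dirac x) fun _ => μ)
  simp only [Finset.piecewise_singleton, integral_pi_update_dirac, zero_add] at hslope
  refine (hslope.mono_left (nhdsGT_le_nhdsNE 0)).congr'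
    (eventually_nhdsWithin_of_forall fun r (hr : 0 < r) => ?_)
  dsimp only
  rw [hexpand hr.le, hexpand_zero, smul_eq_mul]
end

section
/- Let m ≥ 2 be an integer, h ∈ L²(ℝ), ε ≥ 0, ρ(x) = ∫_ℝ h(y−x)h(y) dy, ρ_ε = ε² + ρ(0), and let μ be a Borel probability measure on ℝ. Let f : ℝ^m → ℝ be twice continuously differentiable with f and all its partial derivatives up to order two bounded. Define D¹(x) = Σ_{i=1}^m ∫_{ℝ^{m−1}} f(y₁,…,y_{i−1}, x, y_i,…, y_{m−1}) dμ^{⊗(m−1)} and D²(x, y) = Σ_{1≤i≠j≤m} ∫_{ℝ^{m−2}} f(z₁,…,z_m) dμ^{⊗(m−2)} (z_i = x, z_j = y, remaining coordinates the integration variables in order). Then D¹ is twice differentiable with (D¹)''(x) = Σ_i ∫ ∂²f/∂x_i² evaluated with x in slot i, D² has mixed partial ∂²D²/∂x∂y obtained by differentiating under the integral sign, and the diffusion part of the generator satisfies (1/2) ∫_ℝ ρ_ε (D¹)''(x) μ(dx) + (1/2) ∫_ℝ∫_ℝ ρ(x−y) ∂²D²/∂x∂y (x, y) μ(dx) μ(dy)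 = ⟨μ^m, G^m f⟩. -/
open MeasureTheory Filter Topology

/-- The vector `(z₁,…,z_{m+2})` whose `i`-th coordinate is `x`, whose `j`-th
coordinate is `y`, and whose remaining `m` coordinates are `w 0, …, w (m-1)` in
increasing order of their index (for `i ≠ j`; the final `else 0` branch is
never reached in that case). -/
def insert2 {m : ℕ} (i j : Fin (m + 2)) (x y : ℝ) (w : Fin m → ℝ) :
    Fin (m + 2) → ℝ := fun k =>
  if k = i then x
  else if k = j then y
  else
    let idx := (Finset.univ.filter fun l : Fin (m + 2) => l < k ∧ l ≠ i ∧ l ≠ j).card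
    if h : idx < m then w ⟨idx, h⟩ else 0

/-- The partial derivative `∂f/∂x_i` of a function `f : ℝ^n → ℝ`. -/
noncomputable def pderiv' {n : ℕ} (i : Fin n) (f : (Fin n → ℝ) → ℝ) :
    (Fin n → ℝ) → ℝ :=
  fun x => deriv (fun t => f (Function.update x i t)) (x i)

/-- The differential operator
`G^m f = (1/2) Σ_i ρ_ε ∂²f/∂x_i² + (1/2) Σ_{i≠j} ρ(x_i−x_j) ∂²f/∂x_i∂x_j`. -/
noncomputable def Gm {n : ℕ} (ρ : ℝ → ℝ) (ρε : ℝ) (f : (Fin n → ℝ) → ℝ) :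
    (Fin n → ℝ) → ℝ := fun z =>
  1 / 2 * ∑ i : Fin n, ρε * pderiv' i (pderiv' i f) z +
    1 / 2 * ∑ i : Fin n, ∑ j ∈ Finset.univ \ {i},
      ρ (z i - z j) * pderiv' i (pderiv' j f) z

/-!
Both derivative formulas are differentiation under the integral sign, dominated because `f` and
its partial derivatives up to order two are bounded and `μ` is finite. For the identity:
integrating the inserted point(s) against `μ` and the remaining coordinates against the product
measure is, by Fubini, integration against `μ^{⊗m}`, so each summand of `(D¹)''` resp.
`ρ(x - y) ∂²D²/∂x∂y` integrates to the matching term of `⟨μ^m, G^m f⟩`. Writing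
`insert2 i j x y w` as two successive `Fin.insertNth`s reduces the two-point case to the
one-point case. The weights are integrable because `|ρ| ≤ ‖h‖₂²` (AM–GM under the integral).
-/

theorem ne_of_mem_univ_sdiff_singleton {ι : Type*} [Fintype ι] [DecidableEq ι] {i j : ι}
    (hj : j ∈ Finset.univ \ {i}) : i ≠ j :=
  Ne.symm (by simpa using hj)

section PartialDerivatives

variable {n : ℕ} {g : (Fin n → ℝ) → ℝ}

theorem hasDerivAt_comp_update_fderiv (hg : Differentiable ℝ g) (i : Fin n) (z : Fin n → ℝ)
    (t : ℝ) :
    HasDerivAt (fun s => g (Function.update z i s))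
      (fderiv ℝ g (Function.update z i t) (Pi.single i 1)) t :=
  (hg _).hasFDerivAt.comp_hasDerivAt t (hasDerivAt_update z i t)

theorem pderiv'_eq_fderiv (hg : Differentiable ℝ g) (i : Fin n) (z : Fin n → ℝ) :
    pderiv' i g z = fderiv ℝ g z (Pi.single i 1) := by
  simpa [pderiv'] using (hasDerivAt_comp_update_fderiv hg i z (z i)).deriv

theorem hasDerivAt_comp_update (hg : Differentiable ℝ g) (i : Fin n) (z : Fin n → ℝ)
    (t : ℝ) :
    HasDerivAt (fun s => g (Function.update z i s)) (pderiv' i g (Function.update z i t)) t := by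
  simpa [pderiv'_eq_fderiv hg] using hasDerivAt_comp_update_fderiv hg i z t

theorem contDiff_pderiv' {k : WithTop ℕ∞} (hg : ContDiff ℝ (k + 1) g) (i : Fin n) :
    ContDiff ℝ k (pderiv' i g) := by
  have hd : Differentiable ℝ g := hg.differentiable (by simp)
  rw [show pderiv' i g = fun z => fderiv ℝ g z (Pi.single i 1) from
    funext (pderiv'_eq_fderiv hd i)]
  exact (hg.fderiv_right le_rfl).clm_apply contDiff_const

theorem pderiv'_pderiv'_eq_iteratedFDeriv_two (hg : ContDiff ℝ 2 g) (i j : Fin n)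
    (z : Fin n → ℝ) :
    pderiv' i (pderiv' j g) z = iteratedFDeriv ℝ 2 g z ![Pi.single i 1, Pi.single j 1] := by
  have hd : Differentiable ℝ g := hg.differentiable (by simp)
  have hdd : Differentiable ℝ (fderiv ℝ g) :=
    (hg.fderiv_right (m := 1) le_rfl).differentiable (by simp)
  have hj : pderiv' j g = fun z => fderiv ℝ g z (Pi.single j 1) := funext (pderiv'_eq_fderiv hd j)
  rw [pderiv'_eq_fderiv ((contDiff_pderiv' (k := 1) hg j).differentiable (by simp)), hj,
    iteratedFDeriv_two_apply, fderiv_clm_apply (hdd z) (differentiableAt_const _)]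
  simp

theorem norm_pderiv'_le (hg : Differentiable ℝ g) (i : Fin n) (z : Fin n → ℝ) :
    ‖pderiv' i g z‖ ≤ ‖iteratedFDeriv ℝ 1 g z‖ := by
  simpa [pderiv'_eq_fderiv hg, Pi.norm_single] using (fderiv ℝ g z).le_opNorm (Pi.single i 1)

theorem norm_pderiv'_pderiv'_le (hg : ContDiff ℝ 2 g) (i j : Fin n) (z : Fin n → ℝ) :
    ‖pderiv' i (pderiv' j g) z‖ ≤ ‖iteratedFDeriv ℝ 2 g z‖ := by
  rw [pderiv'_pderiv'_eq_iteratedFDeriv_two hg]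
  simpa [Fin.prod_univ_two, Pi.norm_single] using
    (iteratedFDeriv ℝ 2 g z).le_opNorm ![Pi.single i 1, Pi.single j 1]

theorem exists_bounds_pderiv' (hg : ContDiff ℝ 2 g)
    (hbdd : ∀ k : ℕ, k ≤ 2 → ∃ C, ∀ z, ‖iteratedFDeriv ℝ k g z‖ ≤ C) :
    ∃ C₀ C₁ C₂ : ℝ, (∀ z, ‖g z‖ ≤ C₀) ∧ (∀ i z, ‖pderiv' i g z‖ ≤ C₁) ∧
      ∀ i j z, ‖pderiv' i (pderiv' j g) z‖ ≤ C₂ := by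
  obtain ⟨C₀, hC₀⟩ := hbdd 0 (by norm_num)
  obtain ⟨C₁, hC₁⟩ := hbdd 1 (by norm_num)
  obtain ⟨C₂, hC₂⟩ := hbdd 2 le_rfl
  exact ⟨C₀, C₁, C₂, fun z => by simpa using hC₀ z,
    fun i z => (norm_pderiv'_le (hg.differentiable two_ne_zero) i z).trans (hC₁ z),
    fun i j z => (norm_pderiv'_pderiv'_le hg i j z).trans (hC₂ z)⟩

end PartialDerivatives

section DifferentiationUnderIntegral

variable {n : ℕ} {α : Type*} [MeasurableSpace α] {ν : Measure α} [IsFiniteMeasure ν]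
  {g : (Fin n → ℝ) → ℝ} {C₀ C₁ : ℝ}

theorem hasDerivAt_integral_comp_update (hg : ContDiff ℝ 1 g) (i : Fin n)
    (hg₀ : ∀ z, ‖g z‖ ≤ C₀) (hg₁ : ∀ z, ‖pderiv' i g z‖ ≤ C₁)
    {u : α → Fin n → ℝ} (hu : Measurable u) (x₀ : ℝ) :
    HasDerivAt (fun x => ∫ a, g (Function.update (u a) i x) ∂ν)
      (∫ a, pderiv' i g (Function.update (u a) i x₀) ∂ν) x₀ := by
  have hmeas : ∀ {φ : (Fin n → ℝ) → ℝ}, Continuous φ → ∀ x,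
      AEStronglyMeasurable (fun a => φ (Function.update (u a) i x)) ν := fun hφ x =>
    (hφ.measurable.comp (measurable_update_left.comp hu)).aestronglyMeasurable
  refine (hasDerivAt_integral_of_dominated_loc_of_deriv_le (bound := fun _ => C₁)
    (Metric.ball_mem_nhds x₀ one_pos) (Eventually.of_forall (hmeas hg.continuous))
    (Integrable.of_bound (hmeas hg.continuous x₀) C₀ (ae_of_all _ fun _ => hg₀ _))
    (hmeas (contDiff_pderiv' (k := 0) hg i).continuous x₀)
    (ae_of_all _ fun _ _ _ => hg₁ _) (integrable_const _) (ae_of_all _ fun a x _ => ?_)).2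
  simpa using hasDerivAt_comp_update (hg.differentiable one_ne_zero) i (u a) x

end DifferentiationUnderIntegral

section Insert2

variable {m : ℕ}

theorem insert2_apply_left (i j : Fin (m + 2)) (x y : ℝ) (w : Fin m → ℝ) :
    insert2 i j x y w i = x := by
  simp [insert2]

theorem insert2_apply_right {i j : Fin (m + 2)} (hij : i ≠ j) (x y : ℝ) (w : Fin m → ℝ) :
    insert2 i j x y w j = y := by
  simp [insert2, hij.symm]

theorem update_insert2_left (i j : Fin (m + 2)) (x y t : ℝ) (w : Fin m → ℝ) :
    Function.update (insert2 i j x y w) i t = insert2 i j t y w := by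
  ext k
  by_cases hk : k = i
  · subst hk; simp [insert2]
  · simp [insert2, hk]

theorem update_insert2_right {i j : Fin (m + 2)} (hij : i ≠ j) (x y t : ℝ) (w : Fin m → ℝ) :
    Function.update (insert2 i j x y w) j t = insert2 i j x t w := by
  ext k
  by_cases hk : k = j
  · subst hk; simp [insert2, hij.symm]
  · simp [insert2, hk]

theorem measurable_insert2 (i j : Fin (m + 2)) (x y : ℝ) : Measurable (insert2 i j x y) := by
  refine measurable_pi_lambda _ fun k => ?_
  simp only [insert2]
  split_ifs
  exacts [measurable_const, measurable_const, measurable_pi_apply _, measurable_const]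

theorem insert2_succAbove_eq_insertNth (i : Fin (m + 2)) (j : Fin (m + 1)) (x y : ℝ)
    (w : Fin m → ℝ) :
    insert2 i (i.succAbove j) x y w = i.insertNth x (j.insertNth y w) := by
  ext k
  rcases i.eq_self_or_eq_succAbove k with rfl | ⟨k, rfl⟩
  · simp [insert2]
  rcases j.eq_self_or_eq_succAbove k with rfl | ⟨k, rfl⟩
  · simp [insert2, Fin.succAbove_ne]
  have hcount : (Finset.univ.filter fun l : Fin (m + 2) =>
      l < i.succAbove (j.succAbove k) ∧ l ≠ i ∧ l ≠ i.succAbove j) =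
      (Finset.Iio k).map ((j.succAboveOrderEmb.trans i.succAboveOrderEmb).toEmbedding) := by
    ext l
    simp only [Finset.mem_filter, Finset.mem_univ, true_and, Finset.mem_map, Finset.mem_Iio,
      RelEmbedding.coe_toEmbedding, RelEmbedding.coe_trans, Function.comp_apply,
      Fin.succAboveOrderEmb_apply]
    constructor
    · rintro ⟨hlt, hi, hj⟩
      obtain ⟨l, rfl⟩ := Fin.exists_succAbove_eq hi
      obtain ⟨l, rfl⟩ := Fin.exists_succAbove_eq (ne_of_apply_ne i.succAbove hj)
      exact ⟨l, by simpa using hlt, rfl⟩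
    · rintro ⟨l, hlt, rfl⟩
      exact ⟨by simpa using hlt, Fin.succAbove_ne _ _,
        fun h => Fin.succAbove_ne j l (Fin.succAbove_right_injective h)⟩
  simp [insert2, Fin.succAbove_ne, hcount, Fin.card_Iio]

end Insert2

section Fubini

variable {n : ℕ} {α E : Type*} [MeasurableSpace α] {μ : Measure α} [SigmaFinite μ]
  [NormedAddCommGroup E]

theorem integrable_prod_insertNth {G : (Fin (n + 1) → α) → E}
    (hG : Integrable G (Measure.pi fun _ => μ)) (i : Fin (n + 1)) :
    Integrable (fun p : α × (Fin n → α) => G (i.insertNth p.1 p.2))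
      (μ.prod (Measure.pi fun _ => μ)) :=
  ((measurePreserving_piFinSuccAbove (fun _ => μ) i).symm _).integrable_comp_emb
    (MeasurableEquiv.measurableEmbedding _) |>.mpr hG

variable [NormedSpace ℝ E]

theorem integral_integral_insertNth {G : (Fin (n + 1) → α) → E}
    (hG : Integrable G (Measure.pi fun _ => μ)) (i : Fin (n + 1)) :
    ∫ x, ∫ w, G (i.insertNth x w) ∂(Measure.pi fun _ => μ) ∂μ =
      ∫ z, G z ∂(Measure.pi fun _ => μ) := by
  rw [← integral_prod _ (integrable_prod_insertNth hG i),
    ← ((measurePreserving_piFinSuccAbove (fun _ => μ) i).symm _).integral_comp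
      (MeasurableEquiv.measurableEmbedding _)]
  rfl

theorem integral_sum_integral_insertNth {G : Fin (n + 1) → (Fin (n + 1) → α) → E}
    (hG : ∀ i, Integrable (G i) (Measure.pi fun _ => μ)) :
    ∫ x, ∑ i, ∫ w, G i (i.insertNth x w) ∂(Measure.pi fun _ => μ) ∂μ =
      ∑ i, ∫ z, G i z ∂(Measure.pi fun _ => μ) := by
  rw [integral_finsetSum _ fun i _ => (integrable_prod_insertNth (hG i) i).integral_prod_left]
  exact Finset.sum_congr rfl fun i _ => integral_integral_insertNth (hG i) i

end Fubini

section FubiniInsert2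

variable {m : ℕ} {μ : Measure ℝ} [SigmaFinite μ] {E : Type*} [NormedAddCommGroup E]
  [NormedSpace ℝ E] {G : (Fin (m + 2) → ℝ) → E} {i j : Fin (m + 2)}

theorem ae_integrable_integral_insert2 (hG : Integrable G (Measure.pi fun _ => μ))
    (hij : i ≠ j) :
    ∀ᵐ x ∂μ, Integrable (fun y => ∫ w, G (insert2 i j x y w) ∂(Measure.pi fun _ => μ)) μ := by
  obtain ⟨j, rfl⟩ := Fin.exists_succAbove_eq hij.symm
  filter_upwards [(integrable_prod_insertNth hG i).prod_right_ae] with x hx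
  simpa only [insert2_succAbove_eq_insertNth] using
    (integrable_prod_insertNth hx j).integral_prod_left

theorem integral_integral_insert2_ae_eq (hG : Integrable G (Measure.pi fun _ => μ))
    (hij : i ≠ j) :
    (fun x => ∫ y, ∫ w, G (insert2 i j x y w) ∂(Measure.pi fun _ => μ) ∂μ) =ᵐ[μ]
      fun x => ∫ v, G (i.insertNth x v) ∂(Measure.pi fun _ => μ) := by
  obtain ⟨j, rfl⟩ := Fin.exists_succAbove_eq hij.symm
  filter_upwards [(integrable_prod_insertNth hG i).prod_right_ae] with x hx
  simpa only [insert2_succAbove_eq_insertNth] using integral_integral_insertNth hx j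

theorem integral_integral_integral_insert2 (hG : Integrable G (Measure.pi fun _ => μ))
    (hij : i ≠ j) :
    ∫ x, ∫ y, ∫ w, G (insert2 i j x y w) ∂(Measure.pi fun _ => μ) ∂μ ∂μ =
      ∫ z, G z ∂(Measure.pi fun _ => μ) := by
  rw [integral_congr_ae (integral_integral_insert2_ae_eq hG hij), integral_integral_insertNth hG]

theorem integrable_integral_integral_insert2 (hG : Integrable G (Measure.pi fun _ => μ))
    (hij : i ≠ j) :
    Integrable (fun x => ∫ y, ∫ w, G (insert2 i j x y w) ∂(Measure.pi fun _ => μ) ∂μ)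
      μ :=
  (integrable_prod_insertNth hG i).integral_prod_left.congr
    (integral_integral_insert2_ae_eq hG hij).symm

theorem integral_integral_sum_integral_insert2
    {G : Fin (m + 2) → Fin (m + 2) → (Fin (m + 2) → ℝ) → E}
    (hG : ∀ i j, i ≠ j → Integrable (G i j) (Measure.pi fun _ => μ)) :
    ∫ x, ∫ y, ∑ i, ∑ j ∈ Finset.univ \ {i},
        ∫ w, G i j (insert2 i j x y w) ∂(Measure.pi fun _ => μ) ∂μ ∂μ =
      ∑ i, ∑ j ∈ Finset.univ \ {i}, ∫ z, G i j z ∂(Measure.pi fun _ => μ) := by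
  have hne {i j : Fin (m + 2)} : j ∈ Finset.univ \ {i} → i ≠ j := ne_of_mem_univ_sdiff_singleton
  have hsec : ∀ᵐ x ∂μ, ∀ i j, i ≠ j →
      Integrable (fun y => ∫ w, G i j (insert2 i j x y w) ∂(Measure.pi fun _ => μ)) μ :=
    ae_all_iff.2 fun i => ae_all_iff.2 fun j =>
      eventually_imp_distrib_left.2 fun hij => ae_integrable_integral_insert2 (hG i j hij) hij
  rw [integral_congr_ae (g := fun x => ∑ i, ∑ j ∈ Finset.univ \ {i},
      ∫ y, ∫ w, G i j (insert2 i j x y w) ∂(Measure.pi fun _ => μ) ∂μ) ?_]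
  · rw [integral_finsetSum _ fun i _ => integrable_finsetSum _ fun j hj =>
      integrable_integral_integral_insert2 (hG i j (hne hj)) (hne hj)]
    refine Finset.sum_congr rfl fun i _ => ?_
    rw [integral_finsetSum _ fun j hj =>
      integrable_integral_integral_insert2 (hG i j (hne hj)) (hne hj)]
    exact Finset.sum_congr rfl fun j hj =>
      integral_integral_integral_insert2 (hG i j (hne hj)) (hne hj)
  · filter_upwards [hsec] with x hx
    rw [integral_finsetSum _ fun i _ => integrable_finsetSum _ fun j hj => hx i j (hne hj)]
    exact Finset.sum_congr rfl fun i _ => integral_finsetSum _ fun j hj => hx i j (hne hj)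

end FubiniInsert2

section Autocorrelation

variable {h : ℝ → ℝ}

theorem stronglyMeasurable_autocorrelation (hh : AEStronglyMeasurable h volume) :
    StronglyMeasurable fun x => ∫ y, h (y - x) * h y := by
  have hmk : ∀ x, ∫ y, h (y - x) * h y = ∫ y, hh.mk h (y - x) * hh.mk h y := fun x =>
    integral_congr_ae <|
      ((measurePreserving_sub_right volume x).quasiMeasurePreserving.ae_eq_comp hh.ae_eq_mk).mul
        hh.ae_eq_mk
  simp_rw [hmk]
  exact StronglyMeasurable.integral_prod_right'
    (f := fun p : ℝ × ℝ => hh.mk h (p.2 - p.1) * hh.mk h p.2)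
    ((hh.stronglyMeasurable_mk.comp_measurable (measurable_snd.sub measurable_fst)).mul
      (hh.stronglyMeasurable_mk.comp_measurable measurable_snd))

theorem norm_autocorrelation_le (hh : MemLp h 2 volume) (x : ℝ) :
    ‖∫ y, h (y - x) * h y‖ ≤ ∫ y, h y ^ 2 := by
  have hsq := hh.integrable_sq
  have hsq_x : Integrable (fun y => h (y - x) ^ 2) volume := hsq.comp_sub_right x
  calc ‖∫ y, h (y - x) * h y‖
      ≤ ∫ y, ‖h (y - x) * h y‖ := norm_integral_le_integral_norm _
    _ ≤ ∫ y, (h (y - x) ^ 2 + h y ^ 2) / 2 := by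
      refine integral_mono_of_nonneg (ae_of_all _ fun _ => norm_nonneg _)
        ((hsq_x.add hsq).div_const 2) (ae_of_all _ fun y => ?_)
      simp only [norm_mul, Real.norm_eq_abs]
      rw [← sq_abs (h (y - x)), ← sq_abs (h y)]
      nlinarith [sq_nonneg (|h (y - x)| - |h y|)]
    _ = ∫ y, h y ^ 2 := by
      rw [integral_div, integral_add hsq_x hsq, integral_sub_right_eq_self (fun y => h y ^ 2)]
      ring

theorem integrable_autocorrelation_sub_mul (hh : MemLp h 2 volume) {n : ℕ}
    {ν : Measure (Fin n → ℝ)} {Q : (Fin n → ℝ) → ℝ} (hQ : Integrable Q ν) (i j : Fin n) :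
    Integrable (fun z => (∫ y, h (y - (z i - z j)) * h y) * Q z) ν :=
  hQ.bdd_mul ((stronglyMeasurable_autocorrelation hh.aestronglyMeasurable).comp_measurable
      ((measurable_pi_apply i).sub (measurable_pi_apply j))).aestronglyMeasurable
    (ae_of_all _ fun _ => norm_autocorrelation_le hh _)

end Autocorrelation

section DerivativesOfMarginals

variable {C₀ C₁ : ℝ}

theorem hasDerivAt_sum_integral_insertNth {n : ℕ} {ν : Measure (Fin n → ℝ)}
    [IsFiniteMeasure ν] {g : Fin (n + 1) → (Fin (n + 1) → ℝ) → ℝ}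
    (hg : ∀ i, ContDiff ℝ 1 (g i)) (hg₀ : ∀ i z, ‖g i z‖ ≤ C₀)
    (hg₁ : ∀ i z, ‖pderiv' i (g i) z‖ ≤ C₁) (x : ℝ) :
    HasDerivAt (fun x => ∑ i, ∫ w, g i (i.insertNth x w) ∂ν)
      (∑ i, ∫ w, pderiv' i (g i) (i.insertNth x w) ∂ν) x :=
  HasDerivAt.fun_sum fun i _ => by
    simpa using hasDerivAt_integral_comp_update (hg i) i (hg₀ i) (hg₁ i)
      (u := fun w => i.insertNth 0 w)
      ((MeasurableEquiv.piFinSuccAbove (fun _ => ℝ) i).symm.measurable.comp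
        measurable_prodMk_left)
      x

variable {m : ℕ} {ν : Measure (Fin m → ℝ)} [IsFiniteMeasure ν]
  {g : Fin (m + 2) → Fin (m + 2) → (Fin (m + 2) → ℝ) → ℝ}

theorem hasDerivAt_sum_integral_insert2_left (hg : ∀ i j, ContDiff ℝ 1 (g i j))
    (hg₀ : ∀ i j z, ‖g i j z‖ ≤ C₀) (hg₁ : ∀ i j z, ‖pderiv' i (g i j) z‖ ≤ C₁)
    (x y : ℝ) :
    HasDerivAt (fun x => ∑ i, ∑ j ∈ Finset.univ \ {i}, ∫ w, g i j (insert2 i j x y w) ∂ν)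
      (∑ i, ∑ j ∈ Finset.univ \ {i}, ∫ w, pderiv' i (g i j) (insert2 i j x y w) ∂ν) x :=
  HasDerivAt.fun_sum fun i _ => HasDerivAt.fun_sum fun j _ => by
    simpa [update_insert2_left] using hasDerivAt_integral_comp_update (hg i j) i (hg₀ i j)
      (hg₁ i j) (measurable_insert2 i j 0 y) x

theorem hasDerivAt_sum_integral_insert2_right (hg : ∀ i j, ContDiff ℝ 1 (g i j))
    (hg₀ : ∀ i j z, ‖g i j z‖ ≤ C₀) (hg₁ : ∀ i j z, ‖pderiv' j (g i j) z‖ ≤ C₁)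
    (x y : ℝ) :
    HasDerivAt (fun y => ∑ i, ∑ j ∈ Finset.univ \ {i}, ∫ w, g i j (insert2 i j x y w) ∂ν)
      (∑ i, ∑ j ∈ Finset.univ \ {i}, ∫ w, pderiv' j (g i j) (insert2 i j x y w) ∂ν) y :=
  HasDerivAt.fun_sum fun i _ => HasDerivAt.fun_sum fun j hj => by
    simpa [update_insert2_right (ne_of_mem_univ_sdiff_singleton hj)] using
      hasDerivAt_integral_comp_update (hg i j) j (hg₀ i j) (hg₁ i j) (measurable_insert2 i j x 0) y

end DerivativesOfMarginals

theorem integral_Gm {n : ℕ} {ν : Measure (Fin n → ℝ)} {ρ : ℝ → ℝ} (ρε : ℝ)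
    {f : (Fin n → ℝ) → ℝ} (hdiag : ∀ i, Integrable (pderiv' i (pderiv' i f)) ν)
    (hoff : ∀ i j, i ≠ j →
      Integrable (fun z => ρ (z i - z j) * pderiv' i (pderiv' j f) z) ν) :
    ∫ z, Gm ρ ρε f z ∂ν =
      1 / 2 * (ρε * ∑ i, ∫ z, pderiv' i (pderiv' i f) z ∂ν) +
        1 / 2 * ∑ i, ∑ j ∈ Finset.univ \ {i},
          ∫ z, ρ (z i - z j) * pderiv' i (pderiv' j f) z ∂ν := by
  have hoff' : ∀ i, ∀ j ∈ Finset.univ \ {i},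
      Integrable (fun z => ρ (z i - z j) * pderiv' i (pderiv' j f) z) ν := fun i j hj =>
    hoff i j (ne_of_mem_univ_sdiff_singleton hj)
  have hsum₁ := integrable_finsetSum Finset.univ fun i _ => (hdiag i).const_mul ρε
  have hsum₂ := integrable_finsetSum Finset.univ fun i _ => integrable_finsetSum _ (hoff' i)
  simp only [Gm]
  rw [integral_add (hsum₁.const_mul _) (hsum₂.const_mul _), integral_const_mul,
    integral_const_mul,
    integral_finsetSum _ fun i _ => (hdiag i).const_mul ρε,
    integral_finsetSum _ fun i _ => integrable_finsetSum _ (hoff' i)]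
  simp only [integral_const_mul, ← Finset.mul_sum]
  congr 2
  exact Finset.sum_congr rfl fun i _ => integral_finsetSum _ (hoff' i)

theorem mul_sum_integral_insert2 {m : ℕ} {ν : Measure (Fin m → ℝ)} (ρ : ℝ → ℝ)
    (Q : Fin (m + 2) → Fin (m + 2) → (Fin (m + 2) → ℝ) → ℝ) (x y : ℝ) :
    ρ (x - y) * ∑ i, ∑ j ∈ Finset.univ \ {i}, ∫ w, Q i j (insert2 i j x y w) ∂ν =
      ∑ i, ∑ j ∈ Finset.univ \ {i},
        ∫ w, ρ (insert2 i j x y w i - insert2 i j x y w j) *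
          Q i j (insert2 i j x y w) ∂ν := by
  simp only [Finset.mul_sum, ← integral_const_mul]
  refine Finset.sum_congr rfl fun i _ => Finset.sum_congr rfl fun j hj => ?_
  have hij : i ≠ j := ne_of_mem_univ_sdiff_singleton hj
  simp only [insert2_apply_left, insert2_apply_right hij]

theorem diffusion_generator_identity_general
    (m : ℕ) (h : ℝ → ℝ) (hL2 : MemLp h 2 (volume : Measure ℝ))
    (ρ : ℝ → ℝ)
    (hρ : ∀ x, ρ x = ∫ y, h (y - x) * h y) (ρε : ℝ)
    (μ : Measure ℝ) (hprob : IsProbabilityMeasure μ)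
    (f : (Fin (m + 2) → ℝ) → ℝ) (hf : ContDiff ℝ 2 f)
    (hfbdd : ∀ k : ℕ, k ≤ 2 → ∃ C, ∀ z, ‖iteratedFDeriv ℝ k f z‖ ≤ C)
    (D1 : ℝ → ℝ) (D2 : ℝ → ℝ → ℝ)
    (hD1 : ∀ x : ℝ, D1 x =
      ∑ i : Fin (m + 2),
        ∫ w : Fin (m + 1) → ℝ, f (i.insertNth x w)
          ∂(Measure.pi fun _ : Fin (m + 1) => μ))
    (hD2 : ∀ x y : ℝ, D2 x y =
      ∑ i : Fin (m + 2), ∑ j ∈ Finset.univ \ {i},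
        ∫ w : Fin m → ℝ, f (insert2 i j x y w)
          ∂(Measure.pi fun _ : Fin m => μ)) :
    (∀ x : ℝ, DifferentiableAt ℝ D1 x ∧ DifferentiableAt ℝ (deriv D1) x ∧
      deriv (deriv D1) x =
        ∑ i : Fin (m + 2),
          ∫ w : Fin (m + 1) → ℝ, pderiv' i (pderiv' i f) (i.insertNth x w)
            ∂(Measure.pi fun _ : Fin (m + 1) => μ)) ∧
    (∀ x y : ℝ, deriv (fun a => deriv (fun b => D2 a b) y) x =
      ∑ i : Fin (m + 2), ∑ j ∈ Finset.univ \ {i},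
        ∫ w : Fin m → ℝ, pderiv' i (pderiv' j f) (insert2 i j x y w)
          ∂(Measure.pi fun _ : Fin m => μ)) ∧
    1 / 2 * (∫ x, ρε * deriv (deriv D1) x ∂μ) +
        1 / 2 * (∫ x, ∫ y,
          ρ (x - y) * deriv (fun a => deriv (fun b => D2 a b) y) x ∂μ ∂μ) =
      ∫ z, Gm ρ ρε f z ∂(Measure.pi fun _ : Fin (m + 2) => μ) := by
  obtain ⟨C₀, C₁, C₂, hf₀, hb₁, hb₂⟩ := exists_bounds_pderiv' hf hfbdd
  have hf₁ : ContDiff ℝ 1 f := hf.of_le one_le_two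
  have hD1' : ∀ x, HasDerivAt D1
      (∑ i, ∫ w, pderiv' i f (i.insertNth x w) ∂(Measure.pi fun _ => μ)) x := by
    rw [funext hD1]
    exact hasDerivAt_sum_integral_insertNth (fun _ => hf₁) (fun _ => hf₀) hb₁
  have hD1'' : ∀ x, HasDerivAt (deriv D1)
      (∑ i, ∫ w, pderiv' i (pderiv' i f) (i.insertNth x w) ∂(Measure.pi fun _ => μ)) x := by
    rw [funext fun x => (hD1' x).deriv]
    exact hasDerivAt_sum_integral_insertNth (fun i => contDiff_pderiv' hf i) hb₁
      fun i => hb₂ i i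
  have hD2' : ∀ x y, deriv (fun b => D2 x b) y = ∑ i, ∑ j ∈ Finset.univ \ {i},
      ∫ w, pderiv' j f (insert2 i j x y w) ∂(Measure.pi fun _ => μ) := fun x y => by
    rw [funext (hD2 x)]
    exact (hasDerivAt_sum_integral_insert2_right (fun _ _ => hf₁) (fun _ _ => hf₀)
      (fun _ j => hb₁ j) x y).deriv
  have hD2'' : ∀ x y, deriv (fun a => deriv (fun b => D2 a b) y) x =
      ∑ i, ∑ j ∈ Finset.univ \ {i},
        ∫ w, pderiv' i (pderiv' j f) (insert2 i j x y w) ∂(Measure.pi fun _ => μ) :=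
    fun x y => by
    simp_rw [hD2']
    exact (hasDerivAt_sum_integral_insert2_left (fun _ j => contDiff_pderiv' hf j)
      (fun _ j => hb₁ j) hb₂ x y).deriv
  have hQ : ∀ i j, Integrable (pderiv' i (pderiv' j f)) (Measure.pi fun _ => μ) := fun i j =>
    .of_bound (contDiff_pderiv' (k := 0) (contDiff_pderiv' hf j) i).continuous.aestronglyMeasurable
      C₂ (ae_of_all _ (hb₂ i j))
  have hρQ : ∀ i j, i ≠ j → Integrable (fun z => ρ (z i - z j) * pderiv' i (pderiv' j f) z)
      (Measure.pi fun _ => μ) := fun i j _ => by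
    simpa only [hρ] using integrable_autocorrelation_sub_mul hL2 (hQ i j) i j
  refine ⟨fun x => ⟨(hD1' x).differentiableAt, (hD1'' x).differentiableAt, (hD1'' x).deriv⟩,
    hD2'', ?_⟩
  simp_rw [fun x => (hD1'' x).deriv, hD2'', mul_sum_integral_insert2, integral_const_mul]
  rw [integral_sum_integral_insertNth fun i => hQ i i, integral_integral_sum_integral_insert2 hρQ,
    integral_Gm ρε (fun i => hQ i i) hρQ]

/-- The diffusion part of the generator applied to `F_{m,f}(μ) = ⟨μ^m, f⟩`:
with `D¹` and `D²` the first and second variational derivatives, `D¹` is twice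
differentiable with second derivative obtained by differentiating under the
integral, the mixed partial `∂²D²/∂x∂y` is obtained by differentiating under
the integral, and
`(1/2)∫ ρ_ε (D¹)''(x) μ(dx) + (1/2)∬ ρ(x−y) ∂²D²/∂x∂y (x,y) μ(dx)μ(dy) = ⟨μ^m, G^m f⟩`.
Here the integer `m ≥ 2` of the paper is written as `m + 2`. -/
theorem diffusion_generator_identity
    (m : ℕ) (h : ℝ → ℝ) (hL2 : MemLp h 2 (volume : Measure ℝ))
    (ε : ℝ) (hε : 0 ≤ ε) (ρ : ℝ → ℝ)
    (hρ : ∀ x, ρ x = ∫ y, h (y - x) * h y) (ρε : ℝ) (hρε : ρε = ε ^ 2 + ρ 0)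
    (μ : Measure ℝ) (hprob : IsProbabilityMeasure μ)
    (f : (Fin (m + 2) → ℝ) → ℝ) (hf : ContDiff ℝ 2 f)
    (hfbdd : ∀ k : ℕ, k ≤ 2 → ∃ C, ∀ z, ‖iteratedFDeriv ℝ k f z‖ ≤ C)
    (D1 : ℝ → ℝ) (D2 : ℝ → ℝ → ℝ)
    (hD1 : ∀ x : ℝ, D1 x =
      ∑ i : Fin (m + 2),
        ∫ w : Fin (m + 1) → ℝ, f (i.insertNth x w)
          ∂(Measure.pi fun _ : Fin (m + 1) => μ))
    (hD2 : ∀ x y : ℝ, D2 x y =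
      ∑ i : Fin (m + 2), ∑ j ∈ Finset.univ \ {i},
        ∫ w : Fin m → ℝ, f (insert2 i j x y w)
          ∂(Measure.pi fun _ : Fin m => μ)) :
    (∀ x : ℝ, DifferentiableAt ℝ D1 x ∧ DifferentiableAt ℝ (deriv D1) x ∧
      deriv (deriv D1) x =
        ∑ i : Fin (m + 2),
          ∫ w : Fin (m + 1) → ℝ, pderiv' i (pderiv' i f) (i.insertNth x w)
            ∂(Measure.pi fun _ : Fin (m + 1) => μ)) ∧
    (∀ x y : ℝ, deriv (fun a => deriv (fun b => D2 a b) y) x =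
      ∑ i : Fin (m + 2), ∑ j ∈ Finset.univ \ {i},
        ∫ w : Fin m → ℝ, pderiv' i (pderiv' j f) (insert2 i j x y w)
          ∂(Measure.pi fun _ : Fin m => μ)) ∧
    1 / 2 * (∫ x, ρε * deriv (deriv D1) x ∂μ) +
        1 / 2 * (∫ x, ∫ y,
          ρ (x - y) * deriv (fun a => deriv (fun b => D2 a b) y) x ∂μ ∂μ) =
      ∫ z, Gm ρ ρε f z ∂(Measure.pi fun _ : Fin (m + 2) => μ) :=
  diffusion_generator_identity_general m h hL2 ρ hρ ρε μ hprob f hf hfbdd D1 D2 hD1 hD2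
end

section
/- Let μ be a finite Borel measure on ℝ. Then lim_{ε→0+} I_ε(μ) = μ*(ℝ); that is, ∫_ℝ∫_ℝ max(1 − |x−y|/ε, 0) μ(dx)μ(dy) converges, as ε decreases to 0, to Σ_x μ({x})², the sum of the squared masses of the atoms of μ. -/
open MeasureTheory Filter Topology

/-!
The kernel `max (1 - |x - y| / ε) 0` takes values in `[0, 1]` and, as `ε ↓ 0`, converges pointwise
to the indicator of the diagonal. By dominated convergence `I_ε(μ) → (μ ⊗ μ)(diagonal)`, and by
Fubini the diagonal has measure `∫ μ {x} dμ(x) = ∑ₓ μ {x} ^ 2`, since `x ↦ μ {x}` vanishes off the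
countable set of atoms.
-/

namespace MeasureTheory.Measure

variable {α : Type*} [MeasurableSpace α]

lemma countable_setOf_measure_singleton_pos [MeasurableSingletonClass α] (μ : Measure α)
    [SFinite μ] : {x | 0 < μ {x}}.Countable :=
  countable_meas_pos_of_disjoint_iUnion measurableSet_singleton
    fun _ _ hxy ↦ Set.disjoint_singleton.2 hxy

lemma lintegral_measure_singleton [MeasurableSingletonClass α] (μ ν : Measure α) [SFinite ν] :
    ∫⁻ x, ν {x} ∂μ = ∑' x, μ {x} * ν {x} := by
  set S := {x | 0 < ν {x}}
  have hS := countable_setOf_measure_singleton_pos ν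
  have hsupp : Function.support (fun x ↦ ν {x}) ⊆ S := fun x hx ↦ pos_iff_ne_zero.2 hx
  rw [← Set.indicator_eq_self.2 hsupp, lintegral_indicator hS.measurableSet,
    lintegral_countable _ hS]
  refine (tsum_subtype_eq_of_support_subset fun x hx ↦ ?_).trans
    (tsum_congr fun x ↦ mul_comm (ν {x}) (μ {x}))
  exact hsupp (Function.support_mul_subset_left _ _ hx)

lemma prod_diagonal [MeasurableEq α] (μ ν : Measure α) [SFinite ν] :
    μ.prod ν (Set.diagonal α) = ∑' x, μ {x} * ν {x} := by
  have hfiber (x : α) : Prod.mk x ⁻¹' Set.diagonal α = {x} := by ext; simp [eq_comm]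
  simp_rw [prod_apply measurableSet_diagonal, hfiber, lintegral_measure_singleton]

lemma real_prod_self_diagonal [MeasurableEq α] (μ : Measure α) [IsFiniteMeasure μ] :
    (μ.prod μ).real (Set.diagonal α) = ∑' x, μ.real {x} ^ 2 := by
  rw [measureReal_def, prod_diagonal,
    ENNReal.tsum_toReal_eq fun x ↦ ENNReal.mul_ne_top (measure_ne_top μ _) (measure_ne_top μ _)]
  simp_rw [ENNReal.toReal_mul, sq, measureReal_def]

end MeasureTheory.Measure

lemma max_one_sub_div_mem_Icc {t ε : ℝ} (ht : 0 ≤ t) (hε : 0 ≤ ε) :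
    max (1 - t / ε) 0 ∈ Set.Icc (0 : ℝ) 1 :=
  ⟨le_max_right _ _, max_le (by linarith [div_nonneg ht hε]) zero_le_one⟩

lemma tendsto_max_one_sub_div_nhdsGT_zero {t : ℝ} (ht : 0 < t) :
    Tendsto (fun ε ↦ max (1 - t / ε) 0) (𝓝[>] 0) (𝓝 0) := by
  refine tendsto_const_nhds.congr' ?_
  filter_upwards [Ioo_mem_nhdsGT ht] with ε ⟨hε, hεt⟩
  exact (max_eq_right (by linarith [(one_lt_div hε).2 hεt])).symm

lemma tendsto_max_one_sub_abs_sub_div (p : ℝ × ℝ) :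
    Tendsto (fun ε ↦ max (1 - |p.1 - p.2| / ε) 0) (𝓝[>] 0)
      (𝓝 ((Set.diagonal ℝ).indicator 1 p)) := by
  by_cases hp : p.1 = p.2
  · simp [hp, Set.mem_diagonal_iff]
  · rw [Set.indicator_of_notMem (by exact hp)]
    exact tendsto_max_one_sub_div_nhdsGT_zero (abs_pos.2 (sub_ne_zero.2 hp))

lemma tendsto_Ieps_measureReal_diagonal (μ : Measure ℝ) [IsFiniteMeasure μ] :
    Tendsto (fun ε ↦ Ieps ε μ) (𝓝[>] 0) (𝓝 ((μ.prod μ).real (Set.diagonal ℝ))) := by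
  rw [← integral_indicator_one measurableSet_diagonal]
  refine tendsto_integral_filter_of_dominated_convergence (fun _ ↦ 1) ?_ ?_
    (integrable_const 1) (ae_of_all _ tendsto_max_one_sub_abs_sub_div)
  · exact Eventually.of_forall fun ε ↦ (by fun_prop : Continuous _).aestronglyMeasurable
  · filter_upwards [self_mem_nhdsWithin] with ε hε
    refine ae_of_all _ fun p ↦ ?_
    have h := max_one_sub_div_mem_Icc (abs_nonneg (p.1 - p.2)) (le_of_lt hε)
    rw [Real.norm_of_nonneg h.1]
    exact h.2

/-- For a finite Borel measure `μ` on `ℝ`,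
`I_ε(μ) → μ*(ℝ) = Σ_x μ({x})²` as `ε ↓ 0`. -/
theorem Ieps_tendsto_sum_sq_atoms (μ : Measure ℝ) (hfin : IsFiniteMeasure μ) :
    Tendsto (fun ε => Ieps ε μ) (𝓝[>] (0 : ℝ))
      (𝓝 (∑' x : ℝ, (μ {x}).toReal ^ 2)) := by
  have h := tendsto_Ieps_measureReal_diagonal μ
  rw [Measure.real_prod_self_diagonal] at h
  simpa only [measureReal_def] using h
end
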